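/- arXiv:2302.10359 — 2 statements merged into one kernel-verified Lean document; each statement's English description precedes it below -/
import Mathlib

section
/- Suppose Δ ≥ 1, fix a real p ≥ 1, an integer i ≥ 0, and a finite set F ⊆ ℝ^d with |F| = k. Then the number of cells Z of the axis-aligned grid of side length 2^{−i} (the cells 2^{−i}·(z + [0,1)^d) for z ∈ ℤ^d) satisfying inf_{x∈Z} κ(x,F) ≤ 2^{−p·i+1} is at most k·(7·Δ)^d. -/
/-- `κ(x, F) = min_{f ∈ F} N (x - f)`. -/
noncomputable def setDist {d : ℕ} (N : Seminorm ℝ (Fin d → ℝ))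
    (x : Fin d → ℝ) (F : Finset (Fin d → ℝ)) : ℝ :=
  sInf {r | ∃ f ∈ F, r = N (x - f)}

/-- The `κ`-diameter `Δ` of the unit cube `[0,1)^d`. -/
noncomputable def cubeDiam {d : ℕ} (N : Seminorm ℝ (Fin d → ℝ)) : ℝ :=
  sSup {r | ∃ x y : Fin d → ℝ, (∀ j, 0 ≤ x j ∧ x j < 1) ∧ (∀ j, 0 ≤ y j ∧ y j < 1) ∧
    r = N (x - y)}

/-- The cell `c·(z + [0,1)^d)` of the axis-aligned grid of side length `c`. -/
def gridCell {d : ℕ} (c : ℝ) (z : Fin d → ℤ) : Set (Fin d → ℝ) :=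
  {x | ∀ j, c * z j ≤ x j ∧ x j < c * (z j + 1)}

/-!
Every coordinate of a vector is bounded by its norm: averaging `y` with a sign flip of `y`
isolates one coordinate, and the basis vectors have norm `1`. Since `p ≥ 1`, the threshold
`2^{-p·i+1}` is at most two side lengths, so a close cell contains a point at distance less than
`3·2^{-i}` from some center `f`; that cell lies within three cells of `f` in every coordinate. So
each center accounts for at most `7^d` close cells, and `7^d ≤ (7Δ)^d` because `Δ ≥ 1`.
-/

open Finset

lemma abs_apply_le_of_sign_invariant {ι : Type*} [DecidableEq ι] (N : Seminorm ℝ (ι → ℝ))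
    (hsign : ∀ σ x : ι → ℝ, (∀ j, σ j = 1 ∨ σ j = -1) → N (σ * x) = N x)
    (hbasis : ∀ j, N (Pi.single j 1) = 1) (y : ι → ℝ) (j : ι) : |y j| ≤ N y := by
  set σ : ι → ℝ := fun l => if l = j then 1 else -1
  have hσ : ∀ l, σ l = 1 ∨ σ l = -1 := fun l => by by_cases h : l = j <;> simp [σ, h]
  have hsingle : Pi.single j (y j) = (2 : ℝ)⁻¹ • (y + σ * y) := by
    funext l
    by_cases h : l = j
    · subst h; simp [σ]; ring
    · simp [σ, h]
  calc |y j| = N (y j • Pi.single j 1) := by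
        rw [map_smul_eq_mul, hbasis, Real.norm_eq_abs, mul_one]
    _ = N ((2 : ℝ)⁻¹ • (y + σ * y)) := by rw [← hsingle, ← Pi.single_smul, smul_eq_mul, mul_one]
    _ ≤ 2⁻¹ * (N y + N (σ * y)) := by
        rw [map_smul_eq_mul, Real.norm_of_nonneg (by norm_num)]
        gcongr
        exact map_add_le_add N y (σ * y)
    _ = N y := by rw [hsign σ y hσ]; ring

lemma exists_setDist_eq {d : ℕ} (N : Seminorm ℝ (Fin d → ℝ)) {F : Finset (Fin d → ℝ)}
    (hF : F.Nonempty) (x : Fin d → ℝ) : ∃ f ∈ F, setDist N x F = N (x - f) := by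
  have himage : {r | ∃ f ∈ F, r = N (x - f)} = (fun f => N (x - f)) '' ↑F := by
    ext r; simp [eq_comm]
  unfold setDist
  rw [himage]
  obtain ⟨f, hf, hfx⟩ :=
    ((coe_nonempty.mpr hF).image (fun f => N (x - f))).csInf_mem (F.finite_toSet.image _)
  exact ⟨f, hf, hfx.symm⟩

lemma mem_Icc_floor_div_of_abs_sub_lt {c x a : ℝ} {z : ℤ} (hc : 0 < c)
    (hx : c * z ≤ x ∧ x < c * (z + 1)) (ha : |x - a| < 3 * c) :
    z ∈ Icc (⌊a / c⌋ - 3) (⌊a / c⌋ + 3) := by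
  obtain ⟨hxa, hax⟩ := abs_lt.mp ha
  rw [mem_Icc]
  constructor
  · have : a / c < (z : ℝ) + 4 := by rw [div_lt_iff₀ hc]; linarith
    have : ⌊a / c⌋ < z + 4 := by rw [Int.floor_lt]; exact_mod_cast this
    omega
  · have : (z : ℝ) - 3 ≤ a / c := by rw [le_div_iff₀ hc]; linarith
    have : z - 3 ≤ ⌊a / c⌋ := by rw [Int.le_floor]; exact_mod_cast this
    omega

section Cells

variable {d : ℕ}

lemma gridCell_nonempty {c : ℝ} (hc : 0 < c) (z : Fin d → ℤ) :
    (gridCell c z).Nonempty :=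
  ⟨fun j => c * z j, fun j => ⟨le_rfl, by nlinarith⟩⟩

def closeCells (N : Seminorm ℝ (Fin d → ℝ)) (F : Finset (Fin d → ℝ)) (c T : ℝ) :
    Set (Fin d → ℤ) :=
  {z | sInf {r | ∃ x ∈ gridCell c z, r = setDist N x F} ≤ T}

noncomputable def cellsNear (F : Finset (Fin d → ℝ)) (c : ℝ) : Finset (Fin d → ℤ) :=
  F.biUnion fun f => Fintype.piFinset fun j => Icc (⌊f j / c⌋ - 3) (⌊f j / c⌋ + 3)

lemma card_cellsNear_le (F : Finset (Fin d → ℝ)) (c : ℝ) : #(cellsNear F c) ≤ #F * 7 ^ d := by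
  calc #(cellsNear F c)
      ≤ ∑ f ∈ F, #(Fintype.piFinset fun j => Icc (⌊f j / c⌋ - 3) (⌊f j / c⌋ + 3)) :=
        card_biUnion_le
    _ = ∑ _f ∈ F, 7 ^ d := by
        refine sum_congr rfl fun f _ => ?_
        have h7 : ∀ a : ℤ, #(Icc (a - 3) (a + 3)) = 7 := fun a => by rw [Int.card_Icc]; omega
        simp [Fintype.card_piFinset, h7]
    _ = #F * 7 ^ d := by rw [sum_const, smul_eq_mul]

lemma closeCells_subset_cellsNear (N : Seminorm ℝ (Fin d → ℝ))
    (hsign : ∀ σ x : Fin d → ℝ, (∀ j, σ j = 1 ∨ σ j = -1) → N (σ * x) = N x)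
    (hbasis : ∀ j, N (Pi.single j 1) = 1) {F : Finset (Fin d → ℝ)} (hF : F.Nonempty)
    {c T : ℝ} (hc : 0 < c) (hT : T < 3 * c) : closeCells N F c T ⊆ cellsNear F c := by
  intro z hz
  have hne : {r | ∃ x ∈ gridCell c z, r = setDist N x F}.Nonempty := by
    obtain ⟨y, hy⟩ := gridCell_nonempty hc z
    exact ⟨_, y, hy, rfl⟩
  obtain ⟨_, ⟨x, hx, rfl⟩, hxF⟩ := exists_lt_of_csInf_lt hne (hz.trans_lt hT)
  obtain ⟨f, hf, hxf⟩ := exists_setDist_eq N hF x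
  rw [hxf] at hxF
  simp only [cellsNear, coe_biUnion, Set.mem_iUnion, mem_coe, Fintype.mem_piFinset]
  refine ⟨f, hf, fun j => mem_Icc_floor_div_of_abs_sub_lt hc (hx j) ?_⟩
  exact (abs_apply_le_of_sign_invariant N hsign hbasis (x - f) j).trans_lt hxF

end Cells

lemma two_rpow_neg_mul_add_one_le {p : ℝ} (hp : 1 ≤ p) (i : ℕ) :
    (2 : ℝ) ^ (-p * i + 1) ≤ 2 * 2 ^ (-(i : ℤ)) := by
  calc (2 : ℝ) ^ (-p * i + 1) ≤ 2 ^ ((-(i : ℤ) + 1 : ℤ) : ℝ) := by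
        apply Real.rpow_le_rpow_of_exponent_le (by norm_num)
        push_cast
        nlinarith [(i.cast_nonneg : (0 : ℝ) ≤ i)]
    _ = 2 * 2 ^ (-(i : ℤ)) := by
        rw [Real.rpow_intCast, zpow_add₀ two_ne_zero, zpow_one, mul_comm]

theorem close_cells_count_general {d k : ℕ} (hk : 1 ≤ k)
    (N : Seminorm ℝ (Fin d → ℝ))
    (hsign : ∀ σ x : Fin d → ℝ, (∀ j, σ j = 1 ∨ σ j = -1) → N (σ * x) = N x)
    (hbasis : ∀ j, N (Pi.single j 1) = 1)
    (Δ : ℝ) (hΔ : 1 ≤ Δ)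
    (p : ℝ) (hp : 1 ≤ p)
    (i : ℕ) (F : Finset (Fin d → ℝ)) (hFcard : F.card = k) :
    {z : Fin d → ℤ |
        sInf {r | ∃ x ∈ gridCell ((2 : ℝ) ^ (-(i : ℤ))) z, r = setDist N x F}
          ≤ (2 : ℝ) ^ (-p * i + 1)}.Finite ∧
    (Nat.card {z : Fin d → ℤ |
        sInf {r | ∃ x ∈ gridCell ((2 : ℝ) ^ (-(i : ℤ))) z, r = setDist N x F}
          ≤ (2 : ℝ) ^ (-p * i + 1)} : ℝ)
      ≤ k * (7 * Δ) ^ d := by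
  set c : ℝ := 2 ^ (-(i : ℤ))
  have hc : 0 < c := by positivity
  have hF : F.Nonempty := card_pos.mp (hFcard ▸ hk)
  have hT : (2 : ℝ) ^ (-p * i + 1) < 3 * c := by linarith [two_rpow_neg_mul_add_one_le hp i]
  have hsub := closeCells_subset_cellsNear N hsign hbasis hF hc hT
  refine ⟨(cellsNear F c).finite_toSet.subset hsub, ?_⟩
  have hcard : Nat.card (closeCells N F c (2 ^ (-p * i + 1))) ≤ k * 7 ^ d := by
    rw [Nat.card_coe_set_eq, ← hFcard]
    calc _ ≤ (↑(cellsNear F c) : Set (Fin d → ℤ)).ncard := Set.ncard_le_ncard hsub (finite_toSet _)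
      _ = #(cellsNear F c) := Set.ncard_coe_finset _
      _ ≤ #F * 7 ^ d := card_cellsNear_le F c
  calc (Nat.card (closeCells N F c (2 ^ (-p * i + 1))) : ℝ) ≤ k * 7 ^ d := by exact_mod_cast hcard
    _ ≤ k * (7 * Δ) ^ d := by gcongr; linarith

/-- The number of cells of the grid of side `2^{-i}` whose `κ`-distance to a fixed set of
`k` centers is at most `2^{-p·i+1}` is at most `k·(7Δ)^d`.  Here `κ` is induced by a
sign-invariant normalized norm, and `Δ ≥ 1` is the `κ`-diameter of the unit cube. -/
theorem close_cells_count {d k : ℕ} (hk : 1 ≤ k)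
    (N : Seminorm ℝ (Fin d → ℝ)) (hNdef : ∀ x, N x = 0 → x = 0)
    (hsign : ∀ σ x : Fin d → ℝ, (∀ j, σ j = 1 ∨ σ j = -1) → N (σ * x) = N x)
    (hbasis : ∀ j, N (Pi.single j 1) = 1)
    (Δ : ℝ) (hΔdef : Δ = cubeDiam N) (hΔ : 1 ≤ Δ)
    (p : ℝ) (hp : 1 ≤ p)
    (i : ℕ) (F : Finset (Fin d → ℝ)) (hFcard : F.card = k) :
    {z : Fin d → ℤ |
        sInf {r | ∃ x ∈ gridCell ((2 : ℝ) ^ (-(i : ℤ))) z, r = setDist N x F}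
          ≤ (2 : ℝ) ^ (-p * i + 1)}.Finite ∧
    (Nat.card {z : Fin d → ℤ |
        sInf {r | ∃ x ∈ gridCell ((2 : ℝ) ^ (-(i : ℤ))) z, r = setDist N x F}
          ≤ (2 : ℝ) ^ (-p * i + 1)} : ℝ)
      ≤ k * (7 * Δ) ^ d :=
  close_cells_count_general hk N hsign hbasis Δ hΔ p hp i F hFcard
end

section
/- Let x₁,…,xₙ ∈ B_d ⊆ ℝ^d (Euclidean ball of diameter 1), fix an integer k ≥ 1, a real p ≥ 1, and ε ∈ (0, 1/4), and let π : ℝ^d → ℝ^m be a map with π(xᵢ) ∈ B_m for every i. Suppose that for every finite sequence y₁,…,y_N with each yⱼ ∈ {x₁,…,xₙ} and every k-partition 𝒞 of y₁,…,y_N, the uniform-weight sample partition costs satisfy (1+ε)^{−1}·ĉost(𝒞) ≤ ĉost(π(𝒞)) ≤ (1+ε)·ĉost(𝒞). Then for every vector w of nonnegative weights summing to 1, the optimal weighted clustering costs ŴOPT(w) := min over k-partitions 𝒞 of ĉost(𝒞,w) and ŴOPT_π(w) := min over k-partitions 𝒞 of ĉost(π(𝒞),w) satisfy (1+ε)^{−3}·ŴOPT(w)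 ≤ ŴOPT_π(w) ≤ (1+ε)³·ŴOPT(w). -/
/-- The weighted sample `(k,p)`-partition cost of points `y₁, …, yₙ` labelled by
`ℓ : Fin n → Fin k`, with weights `w` and centers ranging over the ball of diameter 1. -/
noncomputable def sampleCost {E : Type*} [NormedAddCommGroup E] {n k : ℕ}
    (p : ℝ) (y : Fin n → E) (ℓ : Fin n → Fin k) (w : Fin n → ℝ) : ℝ :=
  ⨅ u : Fin k → (Metric.closedBall (0 : E) (1 / 2)),
    ∑ i, w i * ‖y i - (u (ℓ i) : E)‖ ^ p

/-- The optimal weighted sample `(k,p)`-clustering cost: the minimum of the weighted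
partition cost over all `k`-partitions of the points. -/
noncomputable def sampleOPT {E : Type*} [NormedAddCommGroup E] {n : ℕ} (k : ℕ)
    (p : ℝ) (y : Fin n → E) (w : Fin n → ℝ) : ℝ :=
  ⨅ ℓ : Fin n → Fin k, sampleCost p y ℓ w

/-!
Repeating each point `xᵢ` exactly `aᵢ` times turns the cost with rational weights `aᵢ / ∑ⱼ aⱼ`
into a uniform-weight cost of a sample drawn from the `xᵢ`, so the hypothesis compares the two
optimal costs up to a factor `1 + ε` at every rational weight vector. As all points and centers
lie in a ball of diameter 1, optimal costs are 1-Lipschitz in the weights for the `ℓ¹` distance,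
and rational weight vectors are dense among probability vectors; so the comparison holds for
every weight vector, already with the factor `1 + ε ≤ (1 + ε) ^ 3`.
-/

open Finset Metric

lemma exists_sum_abs_sub_div_sum_le {ι : Type*} [Fintype ι] {w : ι → ℝ} (hw : ∀ i, 0 ≤ w i)
    (hsum : ∑ i, w i = 1) {δ : ℝ} (hδ : 0 < δ) :
    ∃ a : ι → ℕ, ∑ i, |w i - (a i : ℝ) / (∑ j, a j : ℕ)| ≤ δ := by
  obtain ⟨K, hK⟩ := exists_nat_gt (2 * Fintype.card ι / δ)
  have hK0 : (0 : ℝ) < K := lt_of_le_of_lt (by positivity) hK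
  -- rounding up keeps `K ≤ ∑ j, a j`, so the normalisation never divides by zero
  refine ⟨fun i => ⌈w i * K⌉₊, ?_⟩
  set a : ι → ℕ := fun i => ⌈w i * K⌉₊
  set M : ℝ := ((∑ j, a j : ℕ) : ℝ) with hM
  have ha_ge : ∀ i, w i * K ≤ a i := fun i => Nat.le_ceil _
  have ha_lt : ∀ i, (a i : ℝ) < w i * K + 1 := fun i =>
    Nat.ceil_lt_add_one (mul_nonneg (hw i) K.cast_nonneg)
  have hKM : (K : ℝ) ≤ M := by
    rw [hM, Nat.cast_sum]
    calc (K : ℝ) = ∑ i, w i * K := by rw [← sum_mul, hsum, one_mul]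
      _ ≤ _ := sum_le_sum fun i _ => ha_ge i
  have hMK : M ≤ K + Fintype.card ι := by
    rw [hM, Nat.cast_sum]
    calc ∑ i, (a i : ℝ) ≤ ∑ i, (w i * K + 1) := sum_le_sum fun i _ => (ha_lt i).le
      _ = K + Fintype.card ι := by
        rw [sum_add_distrib, ← sum_mul, hsum, one_mul, sum_const, card_univ, nsmul_one]
  have hM0 : 0 < M := hK0.trans_le hKM
  have hterm : ∀ i, |w i - a i / M| ≤ (a i / K - w i) + (a i / K - a i / M) := by
    intro i
    have h1 : w i ≤ a i / K := (le_div_iff₀ hK0).mpr (ha_ge i)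
    have h2 : (a i : ℝ) / M ≤ a i / K := div_le_div_of_nonneg_left (by positivity) hK0 hKM
    have h3 : 0 ≤ (a i : ℝ) / M := by positivity
    exact abs_sub_le_iff.mpr ⟨by linarith [hw i], by linarith⟩
  calc ∑ i, |w i - a i / M| ≤ ∑ i, ((a i / K - w i) + (a i / K - a i / M)) :=
        sum_le_sum fun i _ => hterm i
    _ = 2 * (M - K) / K := by
        rw [sum_add_distrib, sum_sub_distrib, sum_sub_distrib, ← sum_div, ← sum_div,
          ← Nat.cast_sum, ← hM, hsum]
        field_simp
        ring
    _ ≤ 2 * Fintype.card ι / K := by gcongr; linarith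
    _ ≤ δ := by
        rw [div_le_iff₀ hK0]
        rw [div_lt_iff₀ hδ] at hK
        linarith

section SampleCost

variable {E F : Type*} [NormedAddCommGroup E] [NormedAddCommGroup F] {n k : ℕ} {p : ℝ}

lemma rpow_norm_sub_le_one (hp : 0 ≤ p) {a b : E} (ha : a ∈ closedBall (0 : E) (1 / 2))
    (hb : b ∈ closedBall (0 : E) (1 / 2)) : ‖a - b‖ ^ p ≤ 1 := by
  rw [mem_closedBall_zero_iff] at ha hb
  exact Real.rpow_le_one (norm_nonneg _) (by linarith [norm_sub_le a b]) hp

lemma sampleCost_nonneg (y : Fin n → E) (ℓ : Fin n → Fin k) {w : Fin n → ℝ}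
    (hw : ∀ i, 0 ≤ w i) : 0 ≤ sampleCost p y ℓ w :=
  Real.iInf_nonneg fun _ => sum_nonneg fun i _ => mul_nonneg (hw i) (by positivity)

lemma sampleCost_le_sum (y : Fin n → E) (ℓ : Fin n → Fin k) {w : Fin n → ℝ}
    (hw : ∀ i, 0 ≤ w i) (u : Fin k → closedBall (0 : E) (1 / 2)) :
    sampleCost p y ℓ w ≤ ∑ i, w i * ‖y i - (u (ℓ i) : E)‖ ^ p :=
  ciInf_le ⟨0, by
    rintro _ ⟨u, rfl⟩
    exact sum_nonneg fun i _ => mul_nonneg (hw i) (by positivity)⟩ u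

lemma sampleCost_le_add_sum_abs_sub (hp : 0 ≤ p) {y : Fin n → E}
    (hy : ∀ i, y i ∈ closedBall (0 : E) (1 / 2)) (ℓ : Fin n → Fin k) {w : Fin n → ℝ}
    (hw : ∀ i, 0 ≤ w i) (w' : Fin n → ℝ) :
    sampleCost p y ℓ w ≤ sampleCost p y ℓ w' + ∑ i, |w i - w' i| := by
  have : Nonempty (closedBall (0 : E) (1 / 2)) := ⟨⟨0, mem_closedBall_self (by norm_num)⟩⟩
  refine le_ciInf_add fun u => (sampleCost_le_sum y ℓ hw u).trans ?_
  rw [← sum_add_distrib]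
  refine sum_le_sum fun i _ => ?_
  have h0 : 0 ≤ ‖y i - (u (ℓ i) : E)‖ ^ p := by positivity
  have h1 := rpow_norm_sub_le_one hp (hy i) (u (ℓ i)).2
  nlinarith [le_abs_self (w i - w' i), abs_nonneg (w i - w' i)]

lemma sampleOPT_nonneg (y : Fin n → E) {w : Fin n → ℝ} (hw : ∀ i, 0 ≤ w i) :
    0 ≤ sampleOPT k p y w :=
  Real.iInf_nonneg fun ℓ => sampleCost_nonneg y ℓ hw

lemma sampleOPT_le_add_sum_abs_sub [Nonempty (Fin k)] (hp : 0 ≤ p) {y : Fin n → E}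
    (hy : ∀ i, y i ∈ closedBall (0 : E) (1 / 2)) {w : Fin n → ℝ} (hw : ∀ i, 0 ≤ w i)
    (w' : Fin n → ℝ) :
    sampleOPT k p y w ≤ sampleOPT k p y w' + ∑ i, |w i - w' i| :=
  le_ciInf_add fun ℓ =>
    (ciInf_le ⟨0, by rintro _ ⟨ℓ, rfl⟩; exact sampleCost_nonneg y ℓ hw⟩ ℓ).trans
      (sampleCost_le_add_sum_abs_sub hp hy ℓ hw w')

lemma sampleCost_comp_sigma_equiv (y : Fin n → E) (ℓ : Fin n → Fin k) (a : Fin n → ℕ) {N : ℕ}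
    (e : Fin N ≃ Σ i, Fin (a i)) :
    sampleCost p (fun j => y (e j).1) (fun j => ℓ (e j).1) (fun _ => (N : ℝ)⁻¹)
      = sampleCost p y ℓ (fun i => (a i : ℝ) / N) := by
  unfold sampleCost
  refine iInf_congr fun u => ?_
  rw [e.sum_comp (fun s => (N : ℝ)⁻¹ * ‖y s.1 - (u (ℓ s.1) : E)‖ ^ p), ← univ_sigma_univ,
    sum_sigma]
  refine sum_congr rfl fun i _ => ?_
  simp only [sum_const, card_univ, Fintype.card_fin, nsmul_eq_mul]
  ring

lemma sampleOPT_nat_weights_le_mul_of_subsamples {y : Fin n → E} {z : Fin n → F} {C : ℝ}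
    (hC : 0 ≤ C)
    (h : ∀ (M : ℕ) (s : Fin M → Fin n) (ℓ : Fin M → Fin k),
      sampleCost p (fun j => z (s j)) ℓ (fun _ => (M : ℝ)⁻¹)
        ≤ C * sampleCost p (fun j => y (s j)) ℓ (fun _ => (M : ℝ)⁻¹))
    (a : Fin n → ℕ) :
    sampleOPT k p z (fun i => (a i : ℝ) / (∑ j, a j : ℕ))
      ≤ C * sampleOPT k p y (fun i => (a i : ℝ) / (∑ j, a j : ℕ)) := by
  have hw : ∀ i, 0 ≤ (a i : ℝ) / (∑ j, a j : ℕ) := fun i => by positivity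
  let e : Fin (∑ j, a j) ≃ Σ i, Fin (a i) := Fintype.equivOfCardEq (by simp)
  unfold sampleOPT
  rw [Real.mul_iInf_of_nonneg hC]
  refine ciInf_mono ⟨0, by rintro _ ⟨ℓ, rfl⟩; exact sampleCost_nonneg z ℓ hw⟩ fun ℓ => ?_
  rw [← sampleCost_comp_sigma_equiv z ℓ a e, ← sampleCost_comp_sigma_equiv y ℓ a e]
  exact h _ (fun j => (e j).1) _

lemma sampleOPT_le_mul_of_forall_nat_weights [Nonempty (Fin k)] (hp : 0 ≤ p) {y : Fin n → E}
    {z : Fin n → F} (hy : ∀ i, y i ∈ closedBall (0 : E) (1 / 2))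
    (hz : ∀ i, z i ∈ closedBall (0 : F) (1 / 2)) {C : ℝ} (hC : 0 ≤ C)
    (h : ∀ a : Fin n → ℕ, sampleOPT k p z (fun i => (a i : ℝ) / (∑ j, a j : ℕ))
      ≤ C * sampleOPT k p y (fun i => (a i : ℝ) / (∑ j, a j : ℕ)))
    {w : Fin n → ℝ} (hw : ∀ i, 0 ≤ w i) (hsum : ∑ i, w i = 1) :
    sampleOPT k p z w ≤ C * sampleOPT k p y w := by
  refine le_of_forall_pos_le_add fun η hη => ?_
  obtain ⟨a, ha⟩ := exists_sum_abs_sub_div_sum_le hw hsum (div_pos hη (by linarith : 0 < 1 + C))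
  set v := fun i => (a i : ℝ) / (∑ j, a j : ℕ)
  set δ := ∑ i, |w i - v i|
  have hv : ∀ i, 0 ≤ v i := fun i => by positivity
  have hz' : sampleOPT k p z w ≤ sampleOPT k p z v + δ :=
    sampleOPT_le_add_sum_abs_sub hp hz hw v
  have hy' : sampleOPT k p y v ≤ sampleOPT k p y w + δ := by
    simpa only [abs_sub_comm (v _)] using sampleOPT_le_add_sum_abs_sub hp hy hv w
  have hδ : (1 + C) * δ ≤ η := by rwa [le_div_iff₀' (by linarith)] at ha
  calc sampleOPT k p z w ≤ C * sampleOPT k p y v + δ := by linarith [h a]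
    _ ≤ C * (sampleOPT k p y w + δ) + δ := by gcongr
    _ ≤ C * sampleOPT k p y w + η := by linarith

end SampleCost

theorem dimension_reduction_weighted_opt_cost_general
    {d m n k : ℕ} (hk : 1 ≤ k)
    (p : ℝ) (hp : 1 ≤ p) (ε : ℝ) (hε0 : 0 < ε)
    (x : Fin n → EuclideanSpace ℝ (Fin d))
    (hx : ∀ i, x i ∈ Metric.closedBall (0 : EuclideanSpace ℝ (Fin d)) (1 / 2))
    (π : EuclideanSpace ℝ (Fin d) → EuclideanSpace ℝ (Fin m))
    (hπ : ∀ i, π (x i) ∈ Metric.closedBall (0 : EuclideanSpace ℝ (Fin m)) (1 / 2))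
    (hpres : ∀ (M : ℕ) (y : Fin M → EuclideanSpace ℝ (Fin d)),
      (∀ j, ∃ i, y j = x i) → ∀ ℓ : Fin M → Fin k,
        (1 + ε)⁻¹ * sampleCost p y ℓ (fun _ => (M : ℝ)⁻¹)
            ≤ sampleCost p (fun j => π (y j)) ℓ (fun _ => (M : ℝ)⁻¹) ∧
        sampleCost p (fun j => π (y j)) ℓ (fun _ => (M : ℝ)⁻¹)
            ≤ (1 + ε) * sampleCost p y ℓ (fun _ => (M : ℝ)⁻¹)) :
    ∀ w : Fin n → ℝ, (∀ i, 0 ≤ w i) → (∑ i, w i) = 1 →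
      ((1 + ε) ^ 3)⁻¹ * sampleOPT k p x w
          ≤ sampleOPT k p (fun i => π (x i)) w ∧
      sampleOPT k p (fun i => π (x i)) w ≤ (1 + ε) ^ 3 * sampleOPT k p x w := by
  intro w hw hsum
  have : Nonempty (Fin k) := Fin.pos_iff_nonempty.mp hk
  have hε : 0 < 1 + ε := by linarith
  have hπx : sampleOPT k p (fun i => π (x i)) w ≤ (1 + ε) * sampleOPT k p x w :=
    sampleOPT_le_mul_of_forall_nat_weights (by linarith) hx hπ hε.le
      (sampleOPT_nat_weights_le_mul_of_subsamples hε.le fun M s ℓ =>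
        (hpres M _ (fun j => ⟨s j, rfl⟩) ℓ).2) hw hsum
  have hxπ : sampleOPT k p x w ≤ (1 + ε) * sampleOPT k p (fun i => π (x i)) w :=
    sampleOPT_le_mul_of_forall_nat_weights (by linarith) hπ hx hε.le
      (sampleOPT_nat_weights_le_mul_of_subsamples hε.le fun M s ℓ =>
        (inv_mul_le_iff₀ hε).mp (hpres M _ (fun j => ⟨s j, rfl⟩) ℓ).1) hw hsum
  have hcube : 1 + ε ≤ (1 + ε) ^ 3 := le_self_pow₀ (by linarith) (by norm_num)
  constructor
  · rw [inv_mul_le_iff₀ (by positivity)]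
    exact hxπ.trans (mul_le_mul_of_nonneg_right hcube (sampleOPT_nonneg _ hw))
  · exact hπx.trans (mul_le_mul_of_nonneg_right hcube (sampleOPT_nonneg _ hw))

/-- If a dimension-reduction map `π` preserves (up to `1 ± ε` factors) the uniform-weight
sample partition costs of every finite sequence drawn from the points `x₁, …, xₙ ∈ B_d`,
then it preserves the optimal weighted clustering costs up to `(1+ε)^{±3}` factors. -/
theorem dimension_reduction_weighted_opt_cost
    {d m n k : ℕ} (hk : 1 ≤ k)
    (p : ℝ) (hp : 1 ≤ p) (ε : ℝ) (hε0 : 0 < ε) (hε : ε < 1 / 4)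
    (x : Fin n → EuclideanSpace ℝ (Fin d))
    (hx : ∀ i, x i ∈ Metric.closedBall (0 : EuclideanSpace ℝ (Fin d)) (1 / 2))
    (π : EuclideanSpace ℝ (Fin d) → EuclideanSpace ℝ (Fin m))
    (hπ : ∀ i, π (x i) ∈ Metric.closedBall (0 : EuclideanSpace ℝ (Fin m)) (1 / 2))
    (hpres : ∀ (M : ℕ) (y : Fin M → EuclideanSpace ℝ (Fin d)),
      (∀ j, ∃ i, y j = x i) → ∀ ℓ : Fin M → Fin k,
        (1 + ε)⁻¹ * sampleCost p y ℓ (fun _ => (M : ℝ)⁻¹)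
            ≤ sampleCost p (fun j => π (y j)) ℓ (fun _ => (M : ℝ)⁻¹) ∧
        sampleCost p (fun j => π (y j)) ℓ (fun _ => (M : ℝ)⁻¹)
            ≤ (1 + ε) * sampleCost p y ℓ (fun _ => (M : ℝ)⁻¹)) :
    ∀ w : Fin n → ℝ, (∀ i, 0 ≤ w i) → (∑ i, w i) = 1 →
      ((1 + ε) ^ 3)⁻¹ * sampleOPT k p x w
          ≤ sampleOPT k p (fun i => π (x i)) w ∧
      sampleOPT k p (fun i => π (x i)) w ≤ (1 + ε) ^ 3 * sampleOPT k p x w :=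
  dimension_reduction_weighted_opt_cost_general hk p hp ε hε0 x hx π hπ hpres
end
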